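/- In the Edwards–Sokal coupling for the q=2 random-cluster model on a finite graph G: sample ω from the random-cluster measure φ(ω) ∝ p^{|ω|}(1−p)^{|E|−|ω|} 2^{#Comp(ω)} with p = 1 − e^{−β}, then color each connected component of ω independently +1 or −1 with probability 1/2 each, and set σ_v equal to the color of the component of v. Then the marginal law of σ is the Ising measure π(σ) ∝ exp(−β|C(σ)|), where C(σ) is the set of edges with differently-colored endpoints. -/

import Mathlib

/-!
For a fixed `ω ⊆ E`, the colorings compatible with `ω` are exactly those constant on the
components of `(V, ω)`; there are `2^{#Comp(ω)}` of them, so the coloring probabilities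
`(1/2)^{#Comp(ω)}` sum to one and cancel the cluster factor of the random-cluster weight.
For a fixed `σ`, the compatible `ω` are the subsets of the set `M` of monochromatic edges, and
the binomial theorem gives `∑_{ω ⊆ M} p^{|ω|} (1-p)^{|E|-|ω|} = (1-p)^{|E|-|M|} = e^{-β|C(σ)|}`.
Summing this over `σ` and exchanging the sums identifies the two normalizing constants.
-/

section

variable {V : Type*} [Fintype V] [DecidableEq V]

/-- Whether the two endpoints of an (unordered) edge receive different spins. -/
def edgeBichromatic (σ : V → Bool) : Sym2 V → Bool :=
  Sym2.lift ⟨fun u v => σ u != σ v,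
    fun u v => by cases hu : σ u <;> cases hv : σ v <;> simp [hu, hv]⟩

/-- `|C(σ)|`: the number of edges of `G` whose endpoints receive different spins. -/
def cutCount (G : SimpleGraph V) [DecidableRel G.Adj] (σ : V → Bool) : ℕ :=
  (G.edgeFinset.filter (fun e => edgeBichromatic σ e = true)).card

/-- The spanning subgraph `(V, ω)` of `G` determined by the open edge set `ω`. -/
def openSubgraph (G : SimpleGraph V) (ω : Finset (Sym2 V)) : SimpleGraph V where
  Adj u v := G.Adj u v ∧ s(u, v) ∈ ω
  symm := ⟨fun u v h => ⟨h.1.symm, by rw [Sym2.eq_swap]; exact h.2⟩⟩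
  loopless := ⟨fun u h => G.loopless.irrefl u h.1⟩

/-- `#Comp(ω)`: the number of connected components of the subgraph `(V, ω)`. -/
noncomputable def compCount (G : SimpleGraph V) (ω : Finset (Sym2 V)) : ℕ :=
  Nat.card (openSubgraph G ω).ConnectedComponent

/-- The `q = 2` random-cluster weight `p^{|ω|}(1−p)^{|E|−|ω|} 2^{#Comp(ω)}`. -/
noncomputable def rcWeight (G : SimpleGraph V) [DecidableRel G.Adj] (p : ℝ)
    (ω : Finset (Sym2 V)) : ℝ :=
  p ^ ω.card * (1 - p) ^ (G.edgeFinset.card - ω.card) * 2 ^ compCount G ω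

/-- Every open edge of `ω` is monochromatic under `σ`. -/
def compatible (σ : V → Bool) (ω : Finset (Sym2 V)) : Prop :=
  ∀ e ∈ ω, edgeBichromatic σ e = false

end

open Finset

theorem Finset.sum_powerset_pow_mul_pow_of_subset {ι R : Type*} [CommSemiring R]
    {s t : Finset ι} (hst : s ⊆ t) (a b : R) :
    ∑ u ∈ s.powerset, a ^ #u * b ^ (#t - #u) = (a + b) ^ #s * b ^ (#t - #s) := by
  rw [← sum_pow_mul_eq_add_pow, sum_mul]
  refine sum_congr rfl fun u hu => ?_
  have hus := card_le_card (mem_powerset.mp hu)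
  have hst := card_le_card hst
  rw [mul_assoc, ← pow_add]
  congr 2
  omega

theorem Finset.filter_powerset_forall {α : Type*} (s : Finset α) (P : α → Prop)
    [DecidablePred P] [DecidablePred fun u : Finset α => ∀ a ∈ u, P a] :
    {u ∈ s.powerset | ∀ a ∈ u, P a} = {a ∈ s | P a}.powerset := by
  ext u
  simp only [mem_filter, mem_powerset, subset_iff]
  exact ⟨fun ⟨hus, hP⟩ a ha => ⟨hus ha, hP a ha⟩,
    fun h => ⟨fun a ha => (h ha).1, fun a ha => (h ha).2⟩⟩

theorem SimpleGraph.card_reachable_invariant_fun {V β : Type*} [Finite V] [Finite β]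
    (H : SimpleGraph V) :
    Nat.card {f : V → β // ∀ u v, H.Reachable u v → f u = f v}
      = Nat.card β ^ Nat.card H.ConnectedComponent :=
  (Nat.card_congr (Setoid.liftEquiv H.reachableSetoid)).trans Nat.card_fun

section EdwardsSokal

variable {V : Type*} [Fintype V] (G : SimpleGraph V) [DecidableRel G.Adj]

variable {G} in
theorem compatible_iff_reachable {ω : Finset (Sym2 V)}
    (hω : ω ⊆ G.edgeFinset) (σ : V → Bool) :
    compatible σ ω ↔ ∀ u v, (openSubgraph G ω).Reachable u v → σ u = σ v := by
  constructor
  · rintro h u v ⟨w⟩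
    induction w with
    | nil => rfl
    | cons hadj _ ih => exact (bne_eq_false_iff_eq.mp (h _ hadj.2)).trans ih
  · intro h e he
    induction e using Sym2.ind with
    | _ u v =>
      have hadj : G.Adj u v := G.mem_edgeFinset.mp (hω he)
      exact bne_eq_false_iff_eq.mpr (h u v (SimpleGraph.Adj.reachable ⟨hadj, he⟩))

open Classical in
theorem card_filter_compatible [DecidableEq V] {ω : Finset (Sym2 V)} (hω : ω ⊆ G.edgeFinset) :
    #{σ : V → Bool | compatible σ ω} = 2 ^ compCount G ω := by
  rw [← Fintype.card_subtype, ← Nat.card_eq_fintype_card,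
    Nat.card_congr (Equiv.subtypeEquivRight (compatible_iff_reachable hω)),
    SimpleGraph.card_reachable_invariant_fun, Nat.card_eq_fintype_card, Fintype.card_bool,
    compCount]

theorem card_monochromatic_add_cutCount (σ : V → Bool) :
    #{e ∈ G.edgeFinset | edgeBichromatic σ e = false} + cutCount G σ = #G.edgeFinset := by
  simpa [cutCount] using
    card_filter_add_card_filter_not (s := G.edgeFinset) (fun e => edgeBichromatic σ e = false)

theorem rcWeight_mul_half_pow (p : ℝ) (ω : Finset (Sym2 V)) :
    rcWeight G p ω * (1 / 2) ^ compCount G ω = p ^ #ω * (1 - p) ^ (#G.edgeFinset - #ω) := by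
  rw [rcWeight, mul_assoc, ← mul_pow]
  norm_num

open Classical in
theorem sum_compatible_half_pow [DecidableEq V] {ω : Finset (Sym2 V)} (hω : ω ⊆ G.edgeFinset) :
    ∑ σ : V → Bool, (if compatible σ ω then ((1 : ℝ) / 2) ^ compCount G ω else 0) = 1 := by
  rw [← sum_filter, sum_const, card_filter_compatible G hω, nsmul_eq_mul]
  push_cast
  rw [← mul_pow]
  norm_num

open Classical in
theorem sum_rcWeight_mul_compatible (p : ℝ) (σ : V → Bool) :
    ∑ ω ∈ G.edgeFinset.powerset,
        rcWeight G p ω * (if compatible σ ω then ((1 : ℝ) / 2) ^ compCount G ω else 0)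
      = (1 - p) ^ cutCount G σ := by
  have hcut := card_monochromatic_add_cutCount G σ
  simp_rw [mul_ite, mul_zero, rcWeight_mul_half_pow]
  rw [← sum_filter]
  unfold compatible
  rw [filter_powerset_forall,
    sum_powerset_pow_mul_pow_of_subset (filter_subset _ _), add_sub_cancel, one_pow, one_mul]
  congr 1
  omega

open Classical in
theorem sum_rcWeight_eq_sum_pow_cutCount [DecidableEq V] (p : ℝ) :
    ∑ ω ∈ G.edgeFinset.powerset, rcWeight G p ω = ∑ σ : V → Bool, (1 - p) ^ cutCount G σ := by
  simp_rw [← sum_rcWeight_mul_compatible G p, sum_comm (γ := V → Bool), ← mul_sum]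
  exact sum_congr rfl fun ω hω => by
    rw [sum_compatible_half_pow G (mem_powerset.mp hω), mul_one]

end EdwardsSokal

open Classical in
/-- The conditional law of `σ` given `ω` is the factor `(1/2)^{#Comp(ω)}` on the colorings
compatible with `ω`. -/
theorem edwards_sokal_marginal_general
    {V : Type*} [Fintype V] [DecidableEq V]
    (G : SimpleGraph V) [DecidableRel G.Adj] (β : ℝ) :
    ∀ σ : V → Bool,
      (∑ ω ∈ G.edgeFinset.powerset,
          rcWeight G (1 - Real.exp (-β)) ω *
            (if compatible σ ω then ((1 : ℝ)/2) ^ compCount G ω else 0))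
        / (∑ ω ∈ G.edgeFinset.powerset, rcWeight G (1 - Real.exp (-β)) ω)
      = Real.exp (-β * (cutCount G σ : ℝ))
        / (∑ σ' : V → Bool, Real.exp (-β * (cutCount G σ' : ℝ))) := by
  intro σ
  have exp_pow (n : ℕ) : Real.exp (-β) ^ n = Real.exp (-β * n) := by
    rw [← Real.exp_nat_mul, mul_comm]
  simp only [sum_rcWeight_mul_compatible, sum_rcWeight_eq_sum_pow_cutCount, sub_sub_cancel,
    exp_pow]

open Classical in
/-- **Edwards–Sokal identity.** Sample `ω ⊆ E` from the `q = 2` random-cluster measure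
with `p = 1 − e^{−β}` and color each connected component of `(V, ω)` independently
`±1` with probability `1/2` each; the component coloring yields the spin configuration
`σ` with probability `(1/2)^{#Comp(ω)}` if every open edge is monochromatic under `σ`,
and `0` otherwise. The resulting marginal law of `σ` is the Ising measure
`π(σ) ∝ exp(−β|C(σ)|)`. -/
theorem edwards_sokal_marginal
    {V : Type*} [Fintype V] [DecidableEq V]
    (G : SimpleGraph V) [DecidableRel G.Adj] (β : ℝ) (hβ : 0 < β) :
    ∀ σ : V → Bool,
      (∑ ω ∈ G.edgeFinset.powerset,
          rcWeight G (1 - Real.exp (-β)) ω *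
            (if compatible σ ω then ((1 : ℝ)/2) ^ compCount G ω else 0))
        / (∑ ω ∈ G.edgeFinset.powerset, rcWeight G (1 - Real.exp (-β)) ω)
      = Real.exp (-β * (cutCount G σ : ℝ))
        / (∑ σ' : V → Bool, Real.exp (-β * (cutCount G σ' : ℝ))) :=
  edwards_sokal_marginal_general G β
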